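/- arXiv:1312.5103 — 2 statements merged into one kernel-verified Lean document; each statement's English description precedes it below -/
import Mathlib

section
/- Let 1/2 < β < 1 and 0 < r < ϱ*(β) with r > 1/4. Then for all s ∈ (r, 1), 1/2 − (√s − √r)² − β + s/2 ≤ 1/2 + r − β − (1 − 2√r)²/2 < 0. -/
noncomputable def detectionBoundary (β : ℝ) : ℝ :=
  if β ≤ 3/4 then β - 1/2 else (1 - Real.sqrt (1 - β))^2

theorem exponent_neg_large_r (r β : ℝ)
    (hβ1 : 1/2 < β) (hβ2 : β < 1) (hr0 : 0 < r)
    (hr : r < detectionBoundary β) (hr4 : r > 1/4) :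
    ∀ s ∈ Set.Ioo r 1,
      1/2 - (Real.sqrt s - Real.sqrt r)^2 - β + s/2
        ≤ 1/2 + r - β - (1 - 2*Real.sqrt r)^2/2 ∧
      1/2 + r - β - (1 - 2*Real.sqrt r)^2/2 < 0 := by
  intro s hs
  obtain ⟨hrs, hs1⟩ := hs
  have hs0 : 0 < s := lt_trans hr0 hrs
  have hx0 : 0 ≤ Real.sqrt r := Real.sqrt_nonneg r
  have hy0 : 0 ≤ Real.sqrt s := Real.sqrt_nonneg s
  have hx2 : (Real.sqrt r)^2 = r := Real.sq_sqrt hr0.le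
  have hy2 : (Real.sqrt s)^2 = s := Real.sq_sqrt hs0.le
  have hx : 1/2 < Real.sqrt r := by nlinarith
  have hy1 : Real.sqrt s < 1 := by nlinarith
  constructor
  · nlinarith [mul_pos (sub_pos.mpr hy1)
      (show (0:ℝ) < 2 * Real.sqrt r - (Real.sqrt s + 1)/2 by nlinarith)]
  · -- need -r + 2√r - β < 0
    by_cases hb : β ≤ 3/4
    · simp only [detectionBoundary, if_pos hb] at hr
      linarith
    · simp only [detectionBoundary, if_neg hb] at hr
      have hz0 : 0 ≤ Real.sqrt (1 - β) := Real.sqrt_nonneg _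
      have hz2 : (Real.sqrt (1 - β))^2 = 1 - β := Real.sq_sqrt (by linarith)
      have hz1 : Real.sqrt (1 - β) < 1 := by nlinarith
      have hxz : Real.sqrt r < 1 - Real.sqrt (1 - β) := by nlinarith
      have h1 : (Real.sqrt (1 - β))^2 < (1 - Real.sqrt r)^2 :=
        pow_lt_pow_left₀ (by linarith) hz0 two_ne_zero
      have h2 : 2 * Real.sqrt r < β + r := by nlinarith [h1]
      nlinarith [h2]
end

section
/- Let θ ∈ (0, 1) and define ϱ*_θ(β) = (√(1−θ) − √(1−β−θ/2))² for 1/2 < β ≤ (3−θ)/4, ϱ*_θ(β) = β − 1/2 for (3−θ)/4 < β ≤ 3/4, and ϱ*_θ(β) = (1−√(1−β))² for 3/4 < β < 1. Then ϱ*_θ(β) ≥ ϱ*(β) for all β ∈ (1/2, 1), with strict inequality for 1/2 < β < (3−θ)/4. -/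
noncomputable def detectionBoundaryTheta (θ β : ℝ) : ℝ :=
  if β ≤ (3 - θ)/4 then (Real.sqrt (1 - θ) - Real.sqrt (1 - β - θ/2))^2
  else if β ≤ 3/4 then β - 1/2
  else (1 - Real.sqrt (1 - β))^2

theorem detectionBoundaryTheta_ge (θ β : ℝ)
    (hθ1 : 0 < θ) (hθ2 : θ < 1) (hβ1 : 1/2 < β) (hβ2 : β < 1) :
    detectionBoundary β ≤ detectionBoundaryTheta θ β ∧
    (β < (3 - θ)/4 → detectionBoundary β < detectionBoundaryTheta θ β) := by
  unfold detectionBoundary detectionBoundaryTheta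
  by_cases h : β ≤ (3 - θ)/4
  · have h34 : β ≤ 3/4 := by linarith
    rw [if_pos h34, if_pos h]
    have ha : (0:ℝ) ≤ 1 - θ := by linarith
    have hb : (0:ℝ) ≤ 1 - β - θ/2 := by linarith
    have hsa := Real.sq_sqrt ha
    have hsb := Real.sq_sqrt hb
    have hprod : Real.sqrt (1-θ) * Real.sqrt (1 - β - θ/2)
        = Real.sqrt ((1-θ)*(1 - β - θ/2)) := (Real.sqrt_mul ha _).symm
    have hc : (0:ℝ) ≤ (5-4*β-3*θ)/4 := by linarith
    have key : Real.sqrt ((1-θ)*(1 - β - θ/2)) ≤ (5-4*β-3*θ)/4 := by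
      rw [show (5-4*β-3*θ)/4 = Real.sqrt (((5-4*β-3*θ)/4)^2) from (Real.sqrt_sq hc).symm]
      exact Real.sqrt_le_sqrt (by nlinarith)
    constructor
    · nlinarith [Real.sqrt_nonneg (1-θ), Real.sqrt_nonneg (1 - β - θ/2)]
    · intro hlt
      have keys : Real.sqrt ((1-θ)*(1 - β - θ/2)) < (5-4*β-3*θ)/4 := by
        rw [show (5-4*β-3*θ)/4 = Real.sqrt (((5-4*β-3*θ)/4)^2) from (Real.sqrt_sq hc).symm]
        exact Real.sqrt_lt_sqrt (by positivity) (by nlinarith)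
      nlinarith [Real.sqrt_nonneg (1-θ), Real.sqrt_nonneg (1 - β - θ/2)]
  · rw [if_neg h]
    exact ⟨le_refl _, fun hlt => absurd (le_of_lt hlt) h⟩
end
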